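/- arXiv:2410.19824 — 3 statements merged into one kernel-verified Lean document; each statement's English description precedes it below -/
import Mathlib

section
/- Let f : ℝ → ℝ be continuous and let u₂ > 0. Suppose û : ℝ → ℝ is C², satisfies û''(z) + c·û'(z) + f(û(z)) = 0 for all z ∈ ℝ, û(z) → 0 and û'(z) → 0 as z → −∞, û(z) → u₂ and û'(z) → 0 as z → +∞, and û' is square-integrable on ℝ. Then c·∫ℝ (û'(z))² dz = −∫₀^{u₂} f(u) du. In particular, c < 0 if and only if ∫₀^{u₂} f(u) du > 0. -/
/-!
Multiplying `û'' + c û' + f(û) = 0` by `û'` shows that the energy `û'²/2 + ∫₀^û f` has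
derivative `-c û'²`. Integrating over `ℝ` and using the limits at `±∞` gives
`c ∫ û'² = -∫₀^{u₂} f`, and `∫ û'² > 0` because `û` is not constant, which fixes the sign of `c`.
-/

open Filter Topology Set MeasureTheory intervalIntegral

section EnergyIdentity

variable {f u : ℝ → ℝ}

theorem hasDerivAt_energy (hf : Continuous f) (a : ℝ) (hu : Differentiable ℝ u)
    (hu' : Differentiable ℝ (deriv u)) (z : ℝ) :
    HasDerivAt (fun z => deriv u z ^ 2 / 2 + ∫ t in a..u z, f t)
      (deriv u z * (deriv (deriv u) z + f (u z))) z := by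
  have hkin := ((hu' z).hasDerivAt.pow 2).div_const 2
  have hpot := (hf.integral_hasStrictDerivAt a (u z)).hasDerivAt.comp z (hu z).hasDerivAt
  exact (hkin.add hpot).congr_deriv (by push_cast; ring)

theorem tendsto_energy (hf : Continuous f) (a b : ℝ) {l : Filter ℝ}
    (hu : Tendsto u l (𝓝 b)) (hu' : Tendsto (deriv u) l (𝓝 0)) :
    Tendsto (fun z => deriv u z ^ 2 / 2 + ∫ t in a..u z, f t) l (𝓝 (∫ t in a..b, f t)) := by
  have hF : Continuous fun v => ∫ t in a..v, f t := continuous_primitive hf.intervalIntegrable a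
  simpa using ((hu'.pow 2).div_const 2).add (hF.tendsto b |>.comp hu)

theorem mul_integral_sq_deriv_eq_neg_integral (hf : Continuous f) {a b c : ℝ}
    (hu : Differentiable ℝ u) (hu' : Differentiable ℝ (deriv u))
    (heq : ∀ z, deriv (deriv u) z + c * deriv u z + f (u z) = 0)
    (hbot : Tendsto u atBot (𝓝 a)) (hbot' : Tendsto (deriv u) atBot (𝓝 0))
    (htop : Tendsto u atTop (𝓝 b)) (htop' : Tendsto (deriv u) atTop (𝓝 0))
    (hL2 : Integrable fun z => deriv u z ^ 2) :
    c * ∫ z, deriv u z ^ 2 = -∫ t in a..b, f t := by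
  have hdiss : ∀ z, HasDerivAt (fun z => deriv u z ^ 2 / 2 + ∫ t in a..u z, f t)
      (-(c * deriv u z ^ 2)) z := fun z => by
    convert hasDerivAt_energy hf a hu hu' z using 1
    linear_combination (-deriv u z) * heq z
  have hftc := integral_of_hasDerivAt_of_tendsto hdiss (hL2.const_mul c).neg
    (tendsto_energy hf a a hbot hbot') (tendsto_energy hf a b htop htop')
  rw [MeasureTheory.integral_neg, MeasureTheory.integral_const_mul, integral_same, sub_zero] at hftc
  linarith

end EnergyIdentity

section Positivity

variable {u : ℝ → ℝ} {a b : ℝ}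

theorem exists_deriv_ne_zero_of_tendsto_ne (hu : Differentiable ℝ u)
    (hbot : Tendsto u atBot (𝓝 a)) (htop : Tendsto u atTop (𝓝 b)) (hab : a ≠ b) :
    ∃ z, deriv u z ≠ 0 := by
  by_contra! h
  have hconst : u = fun _ => u 0 := funext fun x => is_const_of_deriv_eq_zero hu h x 0
  rw [hconst] at hbot htop
  exact hab ((tendsto_nhds_unique tendsto_const_nhds hbot).symm.trans
    (tendsto_nhds_unique tendsto_const_nhds htop))

theorem integral_sq_deriv_pos (hu : Differentiable ℝ u) (hu' : Continuous (deriv u))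
    (hbot : Tendsto u atBot (𝓝 a)) (htop : Tendsto u atTop (𝓝 b)) (hab : a ≠ b)
    (hL2 : Integrable fun z => deriv u z ^ 2) :
    0 < ∫ z, deriv u z ^ 2 := by
  rw [integral_pos_iff_support_of_nonneg (fun z => sq_nonneg _) hL2]
  obtain ⟨z, hz⟩ := exists_deriv_ne_zero_of_tendsto_ne hu hbot htop hab
  exact (hu'.pow 2).isOpen_support.measure_pos volume ⟨z, pow_ne_zero 2 hz⟩

end Positivity

/-- For a traveling front profile `û` connecting `0` to `u₂ > 0` and solving
`û'' + c·û' + f(û) = 0`, with `û, û'` converging at `±∞` and `û'`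
square-integrable, one has `c·∫ℝ (û')² = −∫₀^{u₂} f`; in particular `c < 0`
iff `∫₀^{u₂} f > 0`. -/
theorem stmt7 (f : ℝ → ℝ) (hf : Continuous f) (u₂ c : ℝ) (hu₂ : 0 < u₂)
    (uh : ℝ → ℝ) (hC2 : ContDiff ℝ 2 uh)
    (heq : ∀ z : ℝ, deriv (deriv uh) z + c * deriv uh z + f (uh z) = 0)
    (hlim₁ : Tendsto uh atBot (nhds 0))
    (hlim₂ : Tendsto (deriv uh) atBot (nhds 0))
    (hlim₃ : Tendsto uh atTop (nhds u₂))
    (hlim₄ : Tendsto (deriv uh) atTop (nhds 0))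
    (hL2 : Integrable (fun z => (deriv uh z) ^ 2)) :
    c * (∫ z : ℝ, (deriv uh z) ^ 2) = -∫ u in (0 : ℝ)..u₂, f u ∧
    (c < 0 ↔ 0 < ∫ u in (0 : ℝ)..u₂, f u) := by
  have hderiv : ContDiff ℝ 1 (deriv uh) :=
    (contDiff_succ_iff_deriv.mp (by exact_mod_cast hC2 : ContDiff ℝ (1 + 1 : ℕ) uh)).2.2
  have huh : Differentiable ℝ uh := hC2.differentiable (by norm_num)
  have hidentity := mul_integral_sq_deriv_eq_neg_integral hf huh
    (hderiv.differentiable one_ne_zero) heq hlim₁ hlim₂ hlim₃ hlim₄ hL2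
  have hpos := integral_sq_deriv_pos huh hderiv.continuous hlim₁ hlim₃ hu₂.ne hL2
  refine ⟨hidentity, ?_⟩
  rw [← neg_neg (∫ u in (0 : ℝ)..u₂, f u), ← hidentity, neg_pos]
  simpa using (mul_lt_mul_iff_left₀ hpos (b := c) (c := 0)).symm
end

section
/- Let ã, c̃ : ℝ → ℝ be continuous, let n be an integer, and suppose θ : [z₀, z₁] → ℝ is differentiable and satisfies θ'(z) = −ã(z)·cos²θ(z) − c̃(z)·cos θ(z)·sin θ(z) − sin²θ(z) for all z ∈ [z₀, z₁]. If θ(z₀) < π/2 + n·π, then θ(z) < π/2 + n·π for all z ∈ [z₀, z₁]. -/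
open Filter Topology Set Real

/-- Solutions of the angular equation
`θ' = −ã·cos²θ − c̃·cosθ·sinθ − sin²θ` on `[z₀, z₁]` cannot cross the barrier
lines `θ = π/2 + n·π` upward: if `θ(z₀) < π/2 + n·π` then
`θ(z) < π/2 + n·π` on all of `[z₀, z₁]`. -/
theorem stmt11 (aT cT : ℝ → ℝ) (haT : Continuous aT) (hcT : Continuous cT)
    (n : ℤ) (z₀ z₁ : ℝ) (θ : ℝ → ℝ)
    (hθ : ∀ z ∈ Set.Icc z₀ z₁, HasDerivWithinAt θ
      (-aT z * Real.cos (θ z) ^ 2 -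
        cT z * Real.cos (θ z) * Real.sin (θ z) - Real.sin (θ z) ^ 2)
      (Set.Icc z₀ z₁) z)
    (hinit : θ z₀ < π / 2 + n * π) :
    ∀ z ∈ Set.Icc z₀ z₁, θ z < π / 2 + n * π := by
  set b : ℝ := π / 2 + n * π with hb
  have hcosb : Real.cos b = 0 := by
    rw [hb]
    simp [Real.cos_add, Real.sin_int_mul_pi]
  have hsinb : Real.sin b ^ 2 = 1 := by
    have := Real.sin_sq_add_cos_sq b
    rw [hcosb] at this
    nlinarith
  -- value of the derivative at any point where θ hits the barrier
  have hval : ∀ x : ℝ, θ x = b →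
      -aT x * Real.cos (θ x) ^ 2 -
        cT x * Real.cos (θ x) * Real.sin (θ x) - Real.sin (θ x) ^ 2 = -1 := by
    intro x hx
    rw [hx, hcosb, hsinb]; ring
  have hcont : ContinuousOn θ (Set.Icc z₀ z₁) :=
    fun x hx => (hθ x hx).continuousWithinAt
  -- Step 1: weak inequality everywhere
  have hle : ∀ ⦃x⦄, x ∈ Set.Icc z₀ z₁ → θ x ≤ b := by
    refine image_le_of_deriv_right_lt_deriv_boundary'
      (f' := fun x => -aT x * Real.cos (θ x) ^ 2 -
        cT x * Real.cos (θ x) * Real.sin (θ x) - Real.sin (θ x) ^ 2)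
      (B := fun _ => b) (B' := fun _ => 0) hcont ?_ hinit.le continuousOn_const
      (fun x _ => hasDerivWithinAt_const x _ b) ?_
    · intro x hx
      exact (hθ x (Ico_subset_Icc_self hx)).mono_of_mem_nhdsWithin (Icc_mem_nhdsGE_of_mem hx)
    · intro x _ hxb
      show -aT x * Real.cos (θ x) ^ 2 -
        cT x * Real.cos (θ x) * Real.sin (θ x) - Real.sin (θ x) ^ 2 < 0
      rw [hval x hxb]
      norm_num
  -- Step 2: strict inequality
  intro z hz
  by_contra h
  push_neg at h
  have heq : θ z = b := le_antisymm (hle hz) h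
  have hz₀z : z₀ < z := by
    rcases lt_or_eq_of_le hz.1 with h' | h'
    · exact h'
    · exact absurd (h' ▸ heq) (ne_of_lt hinit)
  -- derivative at z is -1; look at left slopes
  have hder : HasDerivWithinAt θ (-1) (Set.Ioo z₀ z) z := by
    have := hθ z hz
    rw [hval z heq] at this
    exact this.mono (fun x hx => ⟨le_of_lt hx.1, le_trans (le_of_lt hx.2) hz.2⟩)
  rw [hasDerivWithinAt_iff_tendsto_slope] at hder
  have hdiff : Set.Ioo z₀ z \ {z} = Set.Ioo z₀ z := by
    apply diff_singleton_eq_self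
    simp [lt_irrefl]
  rw [hdiff] at hder
  have : NeBot (𝓝[Set.Ioo z₀ z] z) := right_nhdsWithin_Ioo_neBot hz₀z
  have hge : (0 : ℝ) ≤ -1 := by
    refine ge_of_tendsto hder ?_
    filter_upwards [self_mem_nhdsWithin] with s hs
    have hsz : s < z := hs.2
    have hθs : θ s ≤ b := hle ⟨le_of_lt hs.1, le_trans hsz.le hz.2⟩
    have hsl : slope θ z s = (θ s - θ z) / (s - z) := by
      rw [slope_comm, slope_def_field]
      have h1 : z - s ≠ 0 := ne_of_gt (by linarith)
      have h2 : s - z ≠ 0 := ne_of_lt (by linarith)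
      field_simp
      ring
    rw [hsl]
    refine div_nonneg_iff.mpr (Or.inr ⟨?_, ?_⟩) <;> [rw [heq]; skip] <;> linarith
  linarith
end

section
/- Let f : [u₀, U] → ℝ be continuous, let c₁ < c₂ be real numbers, and suppose s₁, s₂ : [u₀, U] → ℝ are differentiable, strictly positive, satisfy sᵢ'(u) = −cᵢ − f(u)/sᵢ(u) for all u ∈ [u₀, U] (i = 1, 2), and s₁(u₀) = s₂(u₀). Then s₁(u) > s₂(u) for all u ∈ (u₀, U]. -/
open Filter Topology Set

/-- If `h` has positive derivative `d` within `s` at `a` and `h a = 0`, then near `a`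
(within `s`), `h` is positive to the right of `a` and negative to the left. -/
lemma sign_near {s : Set ℝ} {h : ℝ → ℝ} {a d : ℝ} (hd : HasDerivWithinAt h d s a)
    (ha : h a = 0) (hdpos : 0 < d) :
    ∃ ε > 0, ∀ x ∈ s, dist x a < ε → (a < x → 0 < h x) ∧ (x < a → h x < 0) := by
  have ht := hasDerivWithinAt_iff_tendsto_slope.mp hd
  have h1 : ∀ᶠ x in 𝓝[s \ {a}] a, 0 < slope h a x :=
    ht.eventually (eventually_gt_nhds hdpos)
  rw [eventually_nhdsWithin_iff, Metric.eventually_nhds_iff] at h1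
  simp only [Set.mem_diff, Set.mem_singleton_iff, and_imp] at h1
  obtain ⟨ε, hε, hε'⟩ := h1
  refine ⟨ε, hε, fun x hx hxd => ⟨fun hax => ?_, fun hax => ?_⟩⟩
  · have hs := hε' hxd hx (ne_of_gt hax)
    rw [slope_def_field, ha, sub_zero] at hs
    rcases div_pos_iff.mp hs with ⟨h1, _⟩ | ⟨_, h2⟩
    · exact h1
    · linarith
  · have hs := hε' hxd hx (ne_of_lt hax)
    rw [slope_def_field, ha, sub_zero] at hs
    rcases div_pos_iff.mp hs with ⟨_, h2⟩ | ⟨h1, _⟩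
    · linarith
    · exact h1

/-- Comparison lemma for orbit graphs: if `c₁ < c₂` and the strictly positive
functions `s₁, s₂` satisfy `sᵢ'(u) = −cᵢ − f(u)/sᵢ(u)` on `[u₀, U]` with
`s₁(u₀) = s₂(u₀)`, then `s₁ > s₂` on `(u₀, U]`. -/
theorem stmt14 (u₀ U : ℝ) (f : ℝ → ℝ) (hf : ContinuousOn f (Set.Icc u₀ U))
    (c₁ c₂ : ℝ) (hc : c₁ < c₂) (s₁ s₂ : ℝ → ℝ)
    (hpos₁ : ∀ u ∈ Set.Icc u₀ U, 0 < s₁ u)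
    (hpos₂ : ∀ u ∈ Set.Icc u₀ U, 0 < s₂ u)
    (hd₁ : ∀ u ∈ Set.Icc u₀ U, HasDerivWithinAt s₁
      (-c₁ - f u / s₁ u) (Set.Icc u₀ U) u)
    (hd₂ : ∀ u ∈ Set.Icc u₀ U, HasDerivWithinAt s₂
      (-c₂ - f u / s₂ u) (Set.Icc u₀ U) u)
    (hinit : s₁ u₀ = s₂ u₀) :
    ∀ u ∈ Set.Ioc u₀ U, s₂ u < s₁ u := by
  intro u hu
  obtain ⟨hu₀u, huU⟩ := hu
  set h : ℝ → ℝ := fun x => s₁ x - s₂ x with hh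
  by_contra hcon
  push_neg at hcon
  have hcon' : h u ≤ 0 := sub_nonpos.mpr hcon
  have hu₀U : u₀ ≤ U := le_trans hu₀u.le huU
  have hmem₀ : u₀ ∈ Set.Icc u₀ U := ⟨le_refl _, hu₀U⟩
  have huIcc : u ∈ Set.Icc u₀ U := ⟨hu₀u.le, huU⟩
  -- derivative of h at points where s₁ = s₂
  have hderiv : ∀ a ∈ Set.Icc u₀ U, s₁ a = s₂ a →
      HasDerivWithinAt h (c₂ - c₁) (Set.Icc u₀ U) a := by
    intro a ha heq
    have hder := (hd₁ a ha).sub (hd₂ a ha)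
    have : (-c₁ - f a / s₁ a) - (-c₂ - f a / s₂ a) = c₂ - c₁ := by
      rw [heq]; ring
    rwa [this] at hder
  have hcont : ContinuousOn h (Set.Icc u₀ U) := fun x hx =>
    ((hd₁ x hx).sub (hd₂ x hx)).continuousWithinAt
  have hu₀0 : h u₀ = 0 := by simp [hh, hinit]
  obtain ⟨ε, hε, hE⟩ := sign_near (hderiv u₀ hmem₀ hinit) hu₀0 (sub_pos.mpr hc)
  -- any nonpositive point of h past u₀ is at least u₀ + ε
  have key : ∀ x ∈ Set.Icc u₀ U, u₀ < x → h x ≤ 0 → u₀ + ε ≤ x := by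
    intro x hx hx0 hhx
    by_contra hlt
    push_neg at hlt
    have hdist : dist x u₀ < ε := by
      rw [Real.dist_eq, abs_of_pos (sub_pos.mpr hx0)]; linarith
    exact absurd ((hE x hx hdist).1 hx0) (not_lt.mpr hhx)
  set B := {x | x ∈ Set.Icc u₀ U ∧ u₀ + ε ≤ x ∧ h x ≤ 0} with hB
  have huB : u ∈ B := ⟨huIcc, key u huIcc hu₀u hcon', hcon'⟩
  have hBc : IsClosed B := by
    have h1 : B = (Set.Icc u₀ U ∩ h ⁻¹' Set.Iic 0) ∩ Set.Ici (u₀ + ε) := by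
      ext x
      simp only [hB, Set.mem_setOf_eq, Set.mem_inter_iff, Set.mem_preimage,
        Set.mem_Iic, Set.mem_Ici]
      tauto
    rw [h1]
    exact (hcont.preimage_isClosed_of_isClosed isClosed_Icc isClosed_Iic).inter
      isClosed_Ici
  have hbdd : BddBelow B := ⟨u₀, fun x hx => hx.1.1⟩
  set b := sInf B with hb
  have hbB : b ∈ B := IsClosed.csInf_mem hBc ⟨u, huB⟩ hbdd
  obtain ⟨hbIcc, hbε, hb0⟩ := hbB
  have hu₀b : u₀ < b := lt_of_lt_of_le (by linarith) hbε
  -- minimality: h > 0 strictly between u₀ and b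
  have hmin : ∀ x, u₀ < x → x < b → 0 < h x := by
    intro x h1 h2
    by_contra hle
    push_neg at hle
    have hxIcc : x ∈ Set.Icc u₀ U := ⟨h1.le, h2.le.trans hbIcc.2⟩
    have := csInf_le hbdd (⟨hxIcc, key x hxIcc h1 hle, hle⟩ : x ∈ B)
    linarith
  -- h b ≥ 0 by left continuity
  have hb_ge : 0 ≤ h b := by
    have hclos : b ∈ closure (Set.Ioo u₀ b) := by
      rw [closure_Ioo (ne_of_lt hu₀b)]; exact ⟨hu₀b.le, le_refl _⟩
    have hne : (𝓝[Set.Ioo u₀ b] b).NeBot :=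
      mem_closure_iff_nhdsWithin_neBot.mp hclos
    have hsub : Set.Ioo u₀ b ⊆ Set.Icc u₀ U := fun x hx =>
      ⟨hx.1.le, hx.2.le.trans hbIcc.2⟩
    have ht : Tendsto h (𝓝[Set.Ioo u₀ b] b) (𝓝 (h b)) :=
      (hcont b hbIcc).mono_left (nhdsWithin_mono _ hsub)
    refine ge_of_tendsto ht (eventually_nhdsWithin_of_forall fun x hx => ?_)
    exact (hmin x hx.1 hx.2).le
  have hb0' : h b = 0 := le_antisymm hb0 hb_ge
  have heqb : s₁ b = s₂ b := by
    have := hb0'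
    simpa [hh, sub_eq_zero] using this
  obtain ⟨ε₂, hε₂, hE₂⟩ := sign_near (hderiv b hbIcc heqb) hb0' (sub_pos.mpr hc)
  set x := max ((u₀ + b) / 2) (b - ε₂ / 2) with hx
  have hx1 : u₀ < x := lt_of_lt_of_le (by linarith) (le_max_left _ _)
  have hx2 : x < b := max_lt (by linarith) (by linarith)
  have hxIcc : x ∈ Set.Icc u₀ U := ⟨hx1.le, hx2.le.trans hbIcc.2⟩
  have hdist : dist x b < ε₂ := by
    rw [Real.dist_eq, abs_of_neg (by linarith : x - b < 0)]
    have := le_max_right ((u₀ + b) / 2) (b - ε₂ / 2)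
    linarith
  exact absurd (hmin x hx1 hx2) (not_lt.mpr ((hE₂ x hxIcc hdist).2 hx2).le)
end
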